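/- arXiv:0910.2317 — 4 statements merged into one kernel-verified Lean document; each statement's English description precedes it below -/
import Mathlib

section
/- Let D be a metric on a finite set X and S = A|B a split of X. Then S is a block split of X relative to D if and only if the isolation index α_S is positive and, for arbitrarily chosen fixed elements a₀ ∈ A and b₀ ∈ B, the identity D(a₀,b₀) + D(a',b') = D(a₀,b') + D(a',b₀) holds for all a' ∈ A and b' ∈ B. -/
open Classical

variable {X : Type*}

/-- `D` is a metric on `X`. -/
def IsMetric (D : X → X → ℝ) : Prop :=
  (∀ x, D x x = 0) ∧ (∀ x y, D x y = D y x) ∧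
  (∀ x y z, D x z ≤ D x y + D y z) ∧ (∀ x y, x ≠ y → 0 < D x y)

/-- `f ∈ P(D)`. -/
def memP (D : X → X → ℝ) (f : X → ℝ) : Prop := ∀ x y, D x y ≤ f x + f y

/-- The virtual distance `D(f|Y) = (1/2) min {f y + f y' - D y y' : y, y' ∈ Y}`. -/
noncomputable def vdist (D : X → X → ℝ) (f : X → ℝ) (Y : Set X) : ℝ :=
  (1 / 2) * sInf {z | ∃ y ∈ Y, ∃ y' ∈ Y, z = f y + f y' - D y y'}

/-- `D(x|Y) := D(k_x|Y)` for the Kuratowski map `k_x`. -/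
noncomputable def kdist (D : X → X → ℝ) (x : X) (Y : Set X) : ℝ :=
  vdist D (fun y => D x y) Y

/-- The isolation index `α_S` of the split `S = A|B`. -/
noncomputable def isoIdx (D : X → X → ℝ) (A B : Set X) : ℝ :=
  (1 / 2) * sInf {z | ∃ a ∈ A, ∃ a' ∈ A, ∃ b ∈ B, ∃ b' ∈ B,
      z = max (D a b + D a' b') (D a b' + D a' b) - D a a' - D b b'}

/-- Adjacency in the graph `Γ_f`: vertices are points of the support of `f`,
and `x y` are joined iff `f x + f y > D x y`. -/
def adj (D : X → X → ℝ) (f : X → ℝ) (x y : X) : Prop :=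
  x ≠ y ∧ f x ≠ 0 ∧ f y ≠ 0 ∧ D x y < f x + f y

/-- The graph `Γ_f` (on vertex set `supp f`) is disconnected. -/
def Disconn (D : X → X → ℝ) (f : X → ℝ) : Prop :=
  ∃ U V : Set X, U.Nonempty ∧ V.Nonempty ∧ Disjoint U V ∧
    U ∪ V = {x | f x ≠ 0} ∧ ∀ u ∈ U, ∀ v ∈ V, ¬ adj D f u v

/-- `Γ_f` is the disjoint union of two cliques with vertex sets `A` and `B`. -/
def DisjUnionTwoCliques (D : X → X → ℝ) (f : X → ℝ) (A B : Set X) : Prop :=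
  A.Nonempty ∧ B.Nonempty ∧ Disjoint A B ∧ A ∪ B = {x | f x ≠ 0} ∧
  (∀ a ∈ A, ∀ a' ∈ A, a ≠ a' → adj D f a a') ∧
  (∀ b ∈ B, ∀ b' ∈ B, b ≠ b' → adj D f b b') ∧
  (∀ a ∈ A, ∀ b ∈ B, ¬ adj D f a b)

/-- `A|B` is a block split of `X` relative to `D`. -/
def IsBlockSplit (D : X → X → ℝ) (A B : Set X) : Prop :=
  ∃ f : X → ℝ, memP D f ∧ (∀ x, f x ≠ 0) ∧ DisjUnionTwoCliques D f A B

/-- `f` lies in the tight span `T(D)`:  `f x = max_y (D x y - f y)` for all `x`. -/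
def memT (D : X → X → ℝ) (f : X → ℝ) : Prop :=
  ∀ x, IsGreatest (Set.range fun y => D x y - f y) (f x)

/-- The endpoint map `f_A = f_{A→α_S, B→0}` of the segment associated with a block split. -/
noncomputable def endpointA (D : X → X → ℝ) (A B : Set X) : X → ℝ :=
  fun x => if x ∈ A then kdist D x B - isoIdx D A B else kdist D x A

/-- The endpoint map `f_B = f_{A→0, B→α_S}` of the segment associated with a block split. -/
noncomputable def endpointB (D : X → X → ℝ) (A B : Set X) : X → ℝ :=
  fun x => if x ∈ A then kdist D x B else kdist D x A - isoIdx D A B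

/-- `A|B` is a split (bipartition into nonempty parts) of `X`. -/
def IsSplit (A B : Set X) : Prop :=
  A.Nonempty ∧ B.Nonempty ∧ Disjoint A B ∧ A ∪ B = Set.univ


/-!
If `f` witnesses a block split, the absence of edges between `A` and `B` together with
`f ∈ P(D)` forces `D a b = f a + f b` across the split. Hence `D` is additive on `A × B`,
which is the four-point identity, and every term of the isolation index equals
`(f a + f a' - D a a') + (f b + f b' - D b b')`, which is positive because `A` and `B` are
cliques. Conversely, the identity makes `D a b = g a + h b` with `g = D(·, b₀)` and
`h = D(a₀, ·) - D(a₀, b₀)`; the terms of the isolation index split the same way, so their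
lower bound `2 α_S` can be distributed over the two sides by shifting `g` down and `h` up by
a common constant, and the shifted pair is a witness for the block split.
-/

open Set

/-- The quantity whose minimum over `a, a' ∈ A`, `b, b' ∈ B` is `2 α_S`. -/
def isoTerm (D : X → X → ℝ) (a a' b b' : X) : ℝ :=
  max (D a b + D a' b') (D a b' + D a' b) - D a a' - D b b'

lemma isoIdx_eq_half_sInf (D : X → X → ℝ) (A B : Set X) :
    isoIdx D A B = 1 / 2 * sInf
      {z | ∃ a ∈ A, ∃ a' ∈ A, ∃ b ∈ B, ∃ b' ∈ B, z = isoTerm D a a' b b'} := rfl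

lemma isoTerm_of_additive {D : X → X → ℝ} {A B : Set X} {g h : X → ℝ}
    (hgh : ∀ a ∈ A, ∀ b ∈ B, D a b = g a + h b) {a a' b b' : X} (ha : a ∈ A) (ha' : a' ∈ A)
    (hb : b ∈ B) (hb' : b' ∈ B) :
    isoTerm D a a' b b' = (g a + g a' - D a a') + (h b + h b' - D b b') := by
  have hcross : D a b' + D a' b = D a b + D a' b' := by
    rw [hgh a ha b hb, hgh a ha b' hb', hgh a' ha' b hb, hgh a' ha' b' hb']
    ring
  rw [isoTerm, hcross, max_self, hgh a ha b hb, hgh a' ha' b' hb']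
  ring

lemma exists_le_sub_and_le_add {ι κ : Type*} {I : Set ι} {J : Set κ} (hI : I.Finite)
    (hI' : I.Nonempty) {p : ι → ℝ} {q : κ → ℝ} {s t : ℝ}
    (h : ∀ i ∈ I, ∀ j ∈ J, s + t ≤ p i + q j) :
    ∃ c, (∀ i ∈ I, s ≤ p i - c) ∧ ∀ j ∈ J, t ≤ q j + c := by
  obtain ⟨i₀, hi₀, hmin⟩ := exists_min_image I p hI hI'
  exact ⟨p i₀ - s, fun i hi => by linarith [hmin i hi], fun j hj => by linarith [h i₀ hi₀ j hj]⟩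

section IsolationIndex

variable [Fintype X] (D : X → X → ℝ) {A B : Set X}

lemma finite_setOf_isoTerm :
    {z | ∃ a ∈ A, ∃ a' ∈ A, ∃ b ∈ B, ∃ b' ∈ B, z = isoTerm D a a' b b'}.Finite := by
  refine (finite_range fun p : (X × X) × X × X => isoTerm D p.1.1 p.1.2 p.2.1 p.2.2).subset ?_
  rintro z ⟨a, -, a', -, b, -, b', -, rfl⟩
  exact ⟨((a, a'), (b, b')), rfl⟩

lemma two_mul_isoIdx_le {a a' b b' : X} (ha : a ∈ A) (ha' : a' ∈ A) (hb : b ∈ B)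
    (hb' : b' ∈ B) : 2 * isoIdx D A B ≤ isoTerm D a a' b b' := by
  have := csInf_le (finite_setOf_isoTerm D).bddBelow ⟨a, ha, a', ha', b, hb, b', hb', rfl⟩
  rw [isoIdx_eq_half_sInf]
  linarith

lemma isoIdx_pos (hA : A.Nonempty) (hB : B.Nonempty)
    (h : ∀ a ∈ A, ∀ a' ∈ A, ∀ b ∈ B, ∀ b' ∈ B, 0 < isoTerm D a a' b b') :
    0 < isoIdx D A B := by
  obtain ⟨a, ha⟩ := hA
  obtain ⟨b, hb⟩ := hB
  rw [isoIdx_eq_half_sInf]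
  refine mul_pos one_half_pos (((finite_setOf_isoTerm D).lt_csInf_iff
    ⟨_, a, ha, a, ha, b, hb, b, hb, rfl⟩).2 ?_)
  rintro z ⟨a, ha, a', ha', b, hb, b', hb', rfl⟩
  exact h a ha a' ha' b hb b' hb'

lemma exists_witness_of_isoIdx_pos (hA : A.Nonempty) (hdisj : Disjoint A B)
    (hα : 0 < isoIdx D A B) {g h : X → ℝ} (hgh : ∀ a ∈ A, ∀ b ∈ B, D a b = g a + h b) :
    ∃ f : X → ℝ, (∀ a ∈ A, ∀ b ∈ B, D a b = f a + f b) ∧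
      (∀ a ∈ A, ∀ a' ∈ A, D a a' < f a + f a') ∧ (∀ b ∈ B, ∀ b' ∈ B, D b b' < f b + f b') := by
  obtain ⟨c, hcA, hcB⟩ := exists_le_sub_and_le_add (toFinite (A ×ˢ A)) (hA.prod hA)
    (p := fun x => g x.1 + g x.2 - D x.1 x.2) (q := fun y => h y.1 + h y.2 - D y.1 y.2)
    (J := B ×ˢ B) (s := isoIdx D A B) (t := isoIdx D A B) fun x hx y hy => by
      rw [← isoTerm_of_additive hgh hx.1 hx.2 hy.1 hy.2]
      linarith [two_mul_isoIdx_le D hx.1 hx.2 hy.1 hy.2]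
  have hnotA : ∀ b ∈ B, b ∉ A := fun b hb => disjoint_right.mp hdisj hb
  refine ⟨fun x => if x ∈ A then g x - c / 2 else h x + c / 2, fun a ha b hb => ?_,
    fun a ha a' ha' => ?_, fun b hb b' hb' => ?_⟩
  · simp only [if_pos ha, if_neg (hnotA b hb)]
    linarith [hgh a ha b hb]
  · simp only [if_pos ha, if_pos ha']
    linarith [hcA (a, a') ⟨ha, ha'⟩]
  · simp only [if_neg (hnotA b hb), if_neg (hnotA b' hb')]
    linarith [hcB (b, b') ⟨hb, hb'⟩]

end IsolationIndex

section BlockSplit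

variable {D : X → X → ℝ} {f : X → ℝ}

lemma pos_of_memP (hD0 : ∀ x, D x x = 0) (hf : memP D f) {x : X} (hx : f x ≠ 0) :
    0 < f x := by
  have := hf x x
  rw [hD0] at this
  exact lt_of_le_of_ne (by linarith) hx.symm

lemma lt_add_of_isClique (hD0 : ∀ x, D x x = 0) {C : Set X} (hpos : ∀ x ∈ C, 0 < f x)
    (hC : ∀ c ∈ C, ∀ c' ∈ C, c ≠ c' → adj D f c c') {c c' : X} (hc : c ∈ C) (hc' : c' ∈ C) :
    D c c' < f c + f c' := by
  by_cases hcc' : c = c'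
  · subst hcc'
    rw [hD0]
    linarith [hpos c hc]
  · exact (hC c hc c' hc' hcc').2.2.2

lemma isBlockSplit_iff (hD0 : ∀ x, D x x = 0) (hsymm : ∀ x y, D x y = D y x) {A B : Set X}
    (hS : IsSplit A B) :
    IsBlockSplit D A B ↔ ∃ f : X → ℝ, (∀ a ∈ A, ∀ b ∈ B, D a b = f a + f b) ∧
      (∀ a ∈ A, ∀ a' ∈ A, D a a' < f a + f a') ∧ (∀ b ∈ B, ∀ b' ∈ B, D b b' < f b + f b') := by
  obtain ⟨hA, hB, hdisj, hcover⟩ := hS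
  constructor
  · rintro ⟨f, hf, hf0, -, -, -, -, hcliqueA, hcliqueB, hnoAB⟩
    have hpos : ∀ x, 0 < f x := fun x => pos_of_memP hD0 hf (hf0 x)
    refine ⟨f, fun a ha b hb => (hf a b).antisymm ?_,
      fun a ha a' ha' => lt_add_of_isClique hD0 (fun x _ => hpos x) hcliqueA ha ha',
      fun b hb b' hb' => lt_add_of_isClique hD0 (fun x _ => hpos x) hcliqueB hb hb'⟩
    have hab : a ≠ b := fun h => disjoint_left.mp hdisj ha (h ▸ hb)
    simpa [adj, hab, hf0] using hnoAB a ha b hb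
  · rintro ⟨f, hAB, hAA, hBB⟩
    have hmem : ∀ x, x ∈ A ∨ x ∈ B := fun x => (hcover.symm ▸ mem_univ x : x ∈ A ∪ B)
    have hpos : ∀ x, 0 < f x := fun x => by
      rcases hmem x with hx | hx
      · linarith [hAA x hx x hx, hD0 x]
      · linarith [hBB x hx x hx, hD0 x]
    have hf0 : ∀ x, f x ≠ 0 := fun x => (hpos x).ne'
    refine ⟨f, fun x y => ?_, hf0, hA, hB, hdisj, ?_,
      fun a ha a' ha' h => ⟨h, hf0 a, hf0 a', hAA a ha a' ha'⟩,
      fun b hb b' hb' h => ⟨h, hf0 b, hf0 b', hBB b hb b' hb'⟩,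
      fun a ha b hb h => (hAB a ha b hb ▸ h.2.2.2).false⟩
    · rcases hmem x with hx | hx <;> rcases hmem y with hy | hy
      · exact (hAA x hx y hy).le
      · exact (hAB x hx y hy).le
      · rw [hsymm, add_comm]
        exact (hAB y hy x hx).le
      · exact (hBB x hx y hy).le
    · simp [hcover, hf0]

end BlockSplit

theorem stmt2 [Fintype X] (D : X → X → ℝ) (hD : IsMetric D) (A B : Set X)
    (hS : IsSplit A B) :
    IsBlockSplit D A B ↔
      (0 < isoIdx D A B ∧ ∀ a₀ ∈ A, ∀ b₀ ∈ B, ∀ a' ∈ A, ∀ b' ∈ B,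
        D a₀ b₀ + D a' b' = D a₀ b' + D a' b₀) := by
  obtain ⟨hD0, hsymm, -, -⟩ := hD
  rw [isBlockSplit_iff hD0 hsymm hS]
  constructor
  · rintro ⟨f, hAB, hAA, hBB⟩
    refine ⟨isoIdx_pos D hS.1 hS.2.1 fun a ha a' ha' b hb b' hb' => ?_,
      fun a₀ ha₀ b₀ hb₀ a' ha' b' hb' => ?_⟩
    · rw [isoTerm_of_additive hAB ha ha' hb hb']
      linarith [hAA a ha a' ha', hBB b hb b' hb']
    · rw [hAB a₀ ha₀ b₀ hb₀, hAB a' ha' b' hb', hAB a₀ ha₀ b' hb', hAB a' ha' b₀ hb₀]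
      ring
  · rintro ⟨hα, hrect⟩
    obtain ⟨a₀, ha₀⟩ := hS.1
    obtain ⟨b₀, hb₀⟩ := hS.2.1
    refine exists_witness_of_isoIdx_pos D hS.1 hS.2.2.1 hα
      (g := fun a => D a b₀) (h := fun b => D a₀ b - D a₀ b₀) fun a ha b hb => ?_
    linarith [hrect a₀ ha₀ b₀ hb₀ a ha b hb]
end

section
/- Let D be a metric on a finite set X with n = |X| ≥ 2 elements. Then the set Σ_D of block splits of X relative to D contains at most 2n − 3 splits. -/
/-!
Two block splits `A|B` and `A'|B'` are compatible: points `a, b, c, d` in the four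
intersections would make the witness of the first split give
`D a b + D c d < D a c + D b d` and the witness of the second the reverse inequality.
A compatible split system, read through the sides avoiding a fixed point `x₀`, is a laminar
family of nonempty subsets of an `(n - 1)`-set. Such a family has at most `2m - 1` members on an
`m`-set: deleting one point `x` from all members loses at most the member `{x}` and merges at
most one pair `D`, `insert x D`.
-/

open Classical

variable {X : Type*}

open Set

variable {α : Type*}

def IsLaminar (F : Set (Set α)) : Prop :=
  ∀ C ∈ F, ∀ C' ∈ F, Disjoint C C' ∨ C ⊆ C' ∨ C' ⊆ C

namespace IsLaminar

variable {F : Set (Set α)}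

theorem mono {G : Set (Set α)} (hF : IsLaminar F) (hG : G ⊆ F) : IsLaminar G :=
  fun C hC C' hC' => hF C (hG hC) C' (hG hC')

theorem image_diff_singleton (hF : IsLaminar F) (x : α) : IsLaminar ((· \ {x}) '' F) := by
  rintro _ ⟨C, hC, rfl⟩ _ ⟨C', hC', rfl⟩
  rcases hF C hC C' hC' with h | h | h
  · exact .inl (h.mono sdiff_subset sdiff_subset)
  · exact .inr (.inl (sdiff_subset_sdiff_left h))
  · exact .inr (.inr (sdiff_subset_sdiff_left h))

theorem subset_of_insert_subset_insert (hF : IsLaminar F) {x : α} {D E : Set α}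
    (hD : D.Nonempty) (hxD : x ∉ D) (hxE : x ∉ E) (hDx : insert x D ∈ F) (hE : E ∈ F)
    (h : insert x D ⊆ insert x E) : D = E := by
  have hDE : D ⊆ E := (insert_subset_insert_iff hxD).1 h
  rcases hF _ hDx E hE with hdisj | hsub | hsub
  · obtain ⟨y, hy⟩ := hD
    exact (hdisj.ne_of_mem (mem_insert_of_mem x hy) (hDE hy) rfl).elim
  · exact (hxE (hsub (mem_insert x D))).elim
  · exact hDE.antisymm ((subset_insert_iff_of_notMem hxE).1 hsub)

theorem subsingleton_insert_mem (hF : IsLaminar F) (hne : ∀ C ∈ F, C.Nonempty) (x : α) :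
    {D ∈ F | x ∉ D ∧ insert x D ∈ F}.Subsingleton := by
  rintro D ⟨hD, hxD, hDx⟩ E ⟨hE, hxE, hEx⟩
  rcases hF _ hDx _ hEx with hdisj | hsub | hsub
  · exact (hdisj.ne_of_mem (mem_insert x D) (mem_insert x E) rfl).elim
  · exact hF.subset_of_insert_subset_insert (hne D hD) hxD hxE hDx hE hsub
  · exact (hF.subset_of_insert_subset_insert (hne E hE) hxE hxD hEx hD hsub).symm

theorem ncard_le [Finite α] (hF : IsLaminar F) (hne : ∀ C ∈ F, C.Nonempty) {U : Set α}
    (hU : ∀ C ∈ F, C ⊆ U) : F.ncard ≤ 2 * U.ncard - 1 := by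
  induction U, toFinite U using Set.Finite.induction_on generalizing F with
  | empty =>
    have : F = ∅ := eq_empty_of_forall_notMem fun C hC =>
      (hne C hC).ne_empty (subset_empty_iff.1 (hU C hC))
    simp [this]
  | @insert x U hxU _ ih =>
    set F' := (· \ {x}) '' F \ {∅}
    have hF' : F'.ncard ≤ 2 * U.ncard - 1 :=
      ih ((hF.image_diff_singleton x).mono sdiff_subset)
        (fun _ hC => nonempty_iff_ne_empty.2 hC.2) <| by
          rintro _ ⟨⟨C, hC, rfl⟩, -⟩
          exact sdiff_singleton_subset_iff.2 (hU C hC)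
    set G := {C ∈ F | x ∉ C}
    set H := {C ∈ F | x ∈ C ∧ C ≠ {x}}
    set H' := (· \ {x}) '' H
    have hFGH : F ⊆ insert {x} (G ∪ H) := by
      intro C hC
      by_cases hxC : x ∈ C
      · by_cases hCx : C = {x}
        · exact .inl hCx
        · exact .inr (.inr ⟨hC, hxC, hCx⟩)
      · exact .inr (.inl ⟨hC, hxC⟩)
    have hH' : H'.ncard = H.ncard := InjOn.ncard_image fun C hC C' hC' h => by
      rw [← insert_sdiff_self_of_mem hC.2.1, ← insert_sdiff_self_of_mem hC'.2.1]
      exact congrArg (insert x) h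
    have hGH' : G ∪ H' ⊆ F' := by
      rintro _ (⟨hC, hxC⟩ | ⟨C, ⟨hC, hxC, hCx⟩, rfl⟩)
      · exact ⟨⟨_, hC, sdiff_singleton_eq_self hxC⟩, (hne _ hC).ne_empty⟩
      · refine ⟨⟨C, hC, rfl⟩, fun h => ?_⟩
        rcases subset_singleton_iff_eq.1 (sdiff_eq_empty.1 h) with h | h
        exacts [(hne C hC).ne_empty h, hCx h]
    have hcollide : (G ∩ H').ncard ≤ 1 := by
      refine ncard_le_one_iff_subsingleton.2 ((hF.subsingleton_insert_mem hne x).anti ?_)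
      rintro _ ⟨⟨hD, hxD⟩, C, ⟨hC, hxC, -⟩, rfl⟩
      exact ⟨hD, hxD, by rwa [insert_sdiff_self_of_mem hxC]⟩
    have := ncard_union_add_ncard_inter G H'
    have := ncard_le_ncard hGH'
    have := ncard_le_ncard (inter_subset_left.trans subset_union_left : G ∩ H' ⊆ G ∪ H')
    have := (ncard_le_ncard hFGH).trans (ncard_insert_le _ _)
    have := ncard_union_le G H
    rw [ncard_insert_of_notMem hxU]
    omega

end IsLaminar

def IsCompatible (A B A' B' : Set X) : Prop :=
  Disjoint A A' ∨ Disjoint A B' ∨ Disjoint B A' ∨ Disjoint B B'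

namespace IsCompatible

variable {A B A' B' : Set X}

theorem swap_left (h : IsCompatible A B A' B') : IsCompatible B A A' B' := by
  unfold IsCompatible at *; tauto

theorem swap_right (h : IsCompatible A B A' B') : IsCompatible A B B' A' := by
  unfold IsCompatible at *; tauto

theorem laminar_of_notMem {x : X} (h : IsCompatible A Aᶜ A' A'ᶜ) (hA : x ∉ A) (hA' : x ∉ A') :
    Disjoint A A' ∨ A ⊆ A' ∨ A' ⊆ A := by
  rcases h with h | h | h | h
  · exact .inl h
  · exact .inr (.inl (disjoint_compl_right_iff_subset.1 h))
  · exact .inr (.inr (disjoint_compl_left_iff_subset.1 h))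
  · exact (h.ne_of_mem (mem_compl hA) (mem_compl hA') rfl).elim

end IsCompatible

theorem IsSplit.eq_compl {A B : Set X} (h : IsSplit A B) : B = Aᶜ :=
  (IsCompl.compl_eq ⟨h.2.2.1, codisjoint_iff.2 h.2.2.2⟩).symm

theorem ncard_le_of_isCompatible [Fintype X] (P : Set X → Set X → Prop)
    (hsplit : ∀ A B, P A B → IsSplit A B)
    (hcompat : ∀ A B A' B', P A B → P A' B' → IsCompatible A B A' B') :
    {s : Sym2 (Set X) | ∃ A B, s = s(A, B) ∧ P A B}.ncard ≤ 2 * Fintype.card X - 3 := by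
  set S := {s : Sym2 (Set X) | ∃ A B, s = s(A, B) ∧ P A B}
  rcases S.eq_empty_or_nonempty with hS | ⟨_, A₀, B₀, -, hP₀⟩
  · simp [hS]
  obtain ⟨x₀, -⟩ := (hsplit A₀ B₀ hP₀).1
  set F := {C : Set X | x₀ ∉ C ∧ (P C Cᶜ ∨ P Cᶜ C)}
  have hSF : S ⊆ (fun C => s(C, Cᶜ)) '' F := by
    rintro _ ⟨A, B, rfl, hP⟩
    obtain rfl := (hsplit A B hP).eq_compl
    by_cases hx₀ : x₀ ∈ A
    · refine ⟨Aᶜ, ⟨not_not.2 hx₀, .inr (by rwa [compl_compl])⟩, ?_⟩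
      dsimp only
      rw [compl_compl, Sym2.eq_swap]
    · exact ⟨A, ⟨hx₀, .inl hP⟩, rfl⟩
  have hcompatF : ∀ C ∈ F, ∀ C' ∈ F, IsCompatible C Cᶜ C' C'ᶜ := by
    rintro C ⟨-, hC | hC⟩ C' ⟨-, hC' | hC'⟩
    · exact hcompat _ _ _ _ hC hC'
    · exact (hcompat _ _ _ _ hC hC').swap_right
    · exact (hcompat _ _ _ _ hC hC').swap_left
    · exact (hcompat _ _ _ _ hC hC').swap_left.swap_right
  have hF : IsLaminar F := fun C hC C' hC' =>
    (hcompatF C hC C' hC').laminar_of_notMem hC.1 hC'.1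
  have hne : ∀ C ∈ F, C.Nonempty := by
    rintro C ⟨-, hC | hC⟩
    exacts [(hsplit _ _ hC).1, (hsplit _ _ hC).2.1]
  have hU : ∀ C ∈ F, C ⊆ {x₀}ᶜ := fun C hC =>
    subset_compl_singleton_iff.2 hC.1
  calc S.ncard ≤ F.ncard := (ncard_le_ncard hSF).trans ncard_image_le
    _ ≤ 2 * ({x₀}ᶜ : Set X).ncard - 1 := hF.ncard_le hne hU
    _ = 2 * Fintype.card X - 3 := by
      rw [ncard_compl, ncard_singleton, Nat.card_eq_fintype_card]
      omega

theorem IsBlockSplit.isSplit {D : X → X → ℝ} {A B : Set X} (h : IsBlockSplit D A B) :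
    IsSplit A B := by
  obtain ⟨f, -, hf, hA, hB, hAB, hunion, -⟩ := h
  exact ⟨hA, hB, hAB, hunion.trans (eq_univ_of_forall hf)⟩

theorem IsBlockSplit.exists_weight {D : X → X → ℝ} {A B : Set X} (h : IsBlockSplit D A B) :
    ∃ f : X → ℝ, (∀ a ∈ A, ∀ a' ∈ A, a ≠ a' → D a a' < f a + f a') ∧
      (∀ b ∈ B, ∀ b' ∈ B, b ≠ b' → D b b' < f b + f b') ∧
      ∀ a ∈ A, ∀ b ∈ B, D a b = f a + f b := by
  obtain ⟨f, hP, hf, -, -, hAB, -, hA, hB, hcross⟩ := h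
  refine ⟨f, fun a ha a' ha' h => (hA a ha a' ha' h).2.2.2,
    fun b hb b' hb' h => (hB b hb b' hb' h).2.2.2, fun a ha b hb => ?_⟩
  by_contra hne
  exact hcross a ha b hb ⟨hAB.ne_of_mem ha hb, hf a, hf b, (hP a b).lt_of_ne hne⟩

theorem IsBlockSplit.isCompatible {D : X → X → ℝ} {A B A' B' : Set X}
    (h : IsBlockSplit D A B) (h' : IsBlockSplit D A' B') : IsCompatible A B A' B' := by
  by_contra hcross
  simp only [IsCompatible, not_or, not_disjoint_iff] at hcross
  obtain ⟨⟨a, ha, ha'⟩, ⟨b, hb, hb'⟩, ⟨c, hc, hc'⟩, ⟨d, hd, hd'⟩⟩ := hcross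
  obtain ⟨f, hfA, hfB, hfAB⟩ := h.exists_weight
  obtain ⟨f', hfA', hfB', hfAB'⟩ := h'.exists_weight
  have hAB := h.isSplit.2.2.1
  have hAB' := h'.isSplit.2.2.1
  have := hfA a ha b hb (hAB'.ne_of_mem ha' hb')
  have := hfB c hc d hd (hAB'.ne_of_mem hc' hd')
  have := hfA' a ha' c hc' (hAB.ne_of_mem ha hc)
  have := hfB' b hb' d hd' (hAB.ne_of_mem hb hd)
  have := hfAB a ha c hc
  have := hfAB b hb d hd
  have := hfAB' a ha' b hb'
  have := hfAB' c hc' d hd'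
  linarith

theorem stmt7_general [Fintype X] (D : X → X → ℝ) :
    {s : Sym2 (Set X) | ∃ A B : Set X, s = s(A, B) ∧ IsBlockSplit D A B}.ncard ≤
      2 * Fintype.card X - 3 :=
  ncard_le_of_isCompatible (IsBlockSplit D) (fun _ _ h => h.isSplit)
    (fun _ _ _ _ h h' => h.isCompatible h')

theorem stmt7 [Fintype X] (D : X → X → ℝ) (hD : IsMetric D)
    (hn : 2 ≤ Fintype.card X) :
    {s : Sym2 (Set X) | ∃ A B : Set X, s = s(A, B) ∧ IsBlockSplit D A B}.ncard ≤
      2 * Fintype.card X - 3 :=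
  stmt7_general D
end

section
/- Let D be a metric on a finite set X and let S = A|B be a block split of X. Define f_B := f_{A→0, B→α_S}, i.e., f_B(a) := D(a|B) for a ∈ A and f_B(b) := D(b|A) − α_S for b ∈ B. Then for any fixed a_S ∈ A and b_S ∈ B, one has f_B(a) = D(a_S|B) − D(a_S,b_S) + D(a,b_S) for all a ∈ A and f_B(b) = D(a_S,b) − D(a_S|B) for all b ∈ B. -/
open Classical

variable {X : Type*}

/-! The block split is witnessed by some `f ∈ P(D)` with `D(a,b) = f(a) + f(b)` across the split.
Hence `D(x|B) = f(x) + D(f|B)` for `x ∈ A`, `D(y|A) = f(y) + D(f|A)` for `y ∈ B`, and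
`α_S = D(f|A) + D(f|B)`; both identities then reduce to linear arithmetic. -/

open scoped Pointwise

theorem IsBlockSplit.disjoint {D : X → X → ℝ} {A B : Set X} (h : IsBlockSplit D A B) :
    Disjoint A B :=
  let ⟨_, _, _, _, _, hAB, _⟩ := h
  hAB

theorem IsBlockSplit.exists_memP_dist_eq_add {D : X → X → ℝ} {A B : Set X}
    (h : IsBlockSplit D A B) :
    ∃ f, memP D f ∧ A.Nonempty ∧ B.Nonempty ∧ ∀ a ∈ A, ∀ b ∈ B, D a b = f a + f b := by
  obtain ⟨f, hfP, hf0, hA, hB, hAB, -, -, -, hcross⟩ := h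
  refine ⟨f, hfP, hA, hB, fun a ha b hb => le_antisymm (hfP a b) (not_lt.mp fun hlt => ?_)⟩
  exact hcross a ha b hb ⟨hAB.ne_of_mem ha hb, hf0 a, hf0 b, hlt⟩

def gapSet (D : X → X → ℝ) (f : X → ℝ) (Y : Set X) : Set ℝ :=
  {z | ∃ y ∈ Y, ∃ y' ∈ Y, z = f y + f y' - D y y'}

section gapSet

variable {D : X → X → ℝ} {f g : X → ℝ} {Y : Set X}

theorem vdist_eq_half_sInf_gapSet : vdist D f Y = 1 / 2 * sInf (gapSet D f Y) := rfl

theorem gapSet_nonempty (hY : Y.Nonempty) : (gapSet D f Y).Nonempty :=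
  let ⟨y, hy⟩ := hY
  ⟨_, y, hy, y, hy, rfl⟩

theorem memP.bddBelow_gapSet (hf : memP D f) : BddBelow (gapSet D f Y) := by
  refine ⟨0, ?_⟩
  rintro _ ⟨y, -, y', -, rfl⟩
  linarith [hf y y']

theorem gapSet_eq_add_singleton_of_eqOn {c : ℝ} (h : ∀ y ∈ Y, g y = f y + c) :
    gapSet D g Y = gapSet D f Y + {2 * c} := by
  ext z
  simp only [gapSet, Set.add_singleton, Set.mem_image, Set.mem_ofPred_eq]
  constructor
  · rintro ⟨y, hy, y', hy', rfl⟩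
    exact ⟨_, ⟨y, hy, y', hy', rfl⟩, by rw [h y hy, h y' hy']; ring⟩
  · rintro ⟨_, ⟨y, hy, y', hy', rfl⟩, rfl⟩
    exact ⟨y, hy, y', hy', by rw [h y hy, h y' hy']; ring⟩

theorem vdist_eq_add_of_eqOn (hf : memP D f) (hY : Y.Nonempty) {c : ℝ}
    (h : ∀ y ∈ Y, g y = f y + c) : vdist D g Y = vdist D f Y + c := by
  rw [vdist_eq_half_sInf_gapSet, vdist_eq_half_sInf_gapSet, gapSet_eq_add_singleton_of_eqOn h,
    csInf_add (gapSet_nonempty hY) hf.bddBelow_gapSet (Set.singleton_nonempty _)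
      bddBelow_singleton, csInf_singleton]
  ring

end gapSet

theorem isoIdx_eq_vdist_add_vdist {D : X → X → ℝ} {f : X → ℝ} {A B : Set X} (hf : memP D f)
    (hA : A.Nonempty) (hB : B.Nonempty) (hAB : ∀ a ∈ A, ∀ b ∈ B, D a b = f a + f b) :
    isoIdx D A B = vdist D f A + vdist D f B := by
  have hquad : ∀ a ∈ A, ∀ a' ∈ A, ∀ b ∈ B, ∀ b' ∈ B,
      max (D a b + D a' b') (D a b' + D a' b) - D a a' - D b b' =
        (f a + f a' - D a a') + (f b + f b' - D b b') := by
    intro a ha a' ha' b hb b' hb'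
    rw [hAB a ha b hb, hAB a' ha' b' hb', hAB a ha b' hb', hAB a' ha' b hb,
      max_eq_left (by linarith)]
    ring
  have hsum : {z | ∃ a ∈ A, ∃ a' ∈ A, ∃ b ∈ B, ∃ b' ∈ B,
      z = max (D a b + D a' b') (D a b' + D a' b) - D a a' - D b b'} =
      gapSet D f A + gapSet D f B := by
    ext z
    simp only [gapSet, Set.mem_add, Set.mem_ofPred_eq]
    constructor
    · rintro ⟨a, ha, a', ha', b, hb, b', hb', rfl⟩
      exact ⟨_, ⟨a, ha, a', ha', rfl⟩, _, ⟨b, hb, b', hb', rfl⟩,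
        (hquad a ha a' ha' b hb b' hb').symm⟩
    · rintro ⟨_, ⟨a, ha, a', ha', rfl⟩, _, ⟨b, hb, b', hb', rfl⟩, rfl⟩
      exact ⟨a, ha, a', ha', b, hb, b', hb', (hquad a ha a' ha' b hb b' hb').symm⟩
  rw [isoIdx, hsum, csInf_add (gapSet_nonempty hA) hf.bddBelow_gapSet (gapSet_nonempty hB)
    hf.bddBelow_gapSet, vdist_eq_half_sInf_gapSet, vdist_eq_half_sInf_gapSet]
  ring

theorem stmt13_general (D : X → X → ℝ) (hD : IsMetric D) (A B : Set X)
    (hBS : IsBlockSplit D A B) (aS : X) (haS : aS ∈ A) (bS : X) (hbS : bS ∈ B) :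
    (∀ a ∈ A, endpointB D A B a = kdist D aS B - D aS bS + D a bS) ∧
    (∀ b ∈ B, endpointB D A B b = D aS b - kdist D aS B) := by
  obtain ⟨f, hf, hA, hB, hAB⟩ := hBS.exists_memP_dist_eq_add
  have hkA : ∀ a ∈ A, kdist D a B = vdist D f B + f a := fun a ha =>
    vdist_eq_add_of_eqOn hf hB fun b hb => by rw [hAB a ha b hb, add_comm]
  have hkB : ∀ b ∈ B, kdist D b A = vdist D f A + f b := fun b hb =>
    vdist_eq_add_of_eqOn hf hA fun a ha => by rw [hD.2.1, hAB a ha b hb]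
  have hiso := isoIdx_eq_vdist_add_vdist hf hA hB hAB
  refine ⟨fun a ha => ?_, fun b hb => ?_⟩
  · rw [endpointB, if_pos ha, hkA a ha, hkA aS haS, hAB aS haS bS hbS, hAB a ha bS hbS]
    ring
  · rw [endpointB, if_neg (hBS.disjoint.notMem_of_mem_right hb), hkB b hb, hiso, hkA aS haS,
      hAB aS haS b hb]
    ring

theorem stmt13 [Fintype X] (D : X → X → ℝ) (hD : IsMetric D) (A B : Set X)
    (hBS : IsBlockSplit D A B) (aS : X) (haS : aS ∈ A) (bS : X) (hbS : bS ∈ B) :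
    (∀ a ∈ A, endpointB D A B a = kdist D aS B - D aS bS + D a bS) ∧
    (∀ b ∈ B, endpointB D A B b = D aS b - kdist D aS B) :=
  stmt13_general D hD A B hBS aS haS bS hbS
end

section
/- Let D be a metric on a finite set X, x ∈ X, X' := X \ {x}, and D' the restriction of D to X'. Suppose f ∈ T(D) is a cutpoint whose graph Γ_f is disconnected but such that there is no block split S = A|B of X with f ∈ {f_A, f_B}. If the restriction f' of f to X' has Γ_{f'} connected or equal to the disjoint union of two cliques, then there exists a connected component of Γ_f whose vertex set A is a clique with D(f|A) > 0, and, setting B := X \ A, the split A|B is a block split of X with f = f_B. -/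
open Classical

variable {X : Type*}

/-!
Since `f` is not a Kuratowski map it has full support, so `Γ_f` is a graph on all of `X`, and a
disconnection of `Γ_f` is a set `U` with no edge leaving it. If `Γ_{f'}` is connected, one side of
the cut lies in `{x}`; if `Γ_{f'}` is two cliques, each clique lies in one side, so again one side
is a clique. That clique side `A` is a component; as `Γ_f` is not two cliques, its complement
contains a non-adjacent pair `b, b'`, i.e. `f b + f b' = D b b'`. On the cut all tightness
inequalities are equalities, `D a b = f a + f b`, and the minimal slack
`m = 2 D(f|A)` of `f` on `A` is positive.
Everything is now explicit: `D(y|B) = f y` on `A`, `D(y|A) = f y + m/2` on `B`, `α_{A|B} = m/2`,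
so `f = f_B`, and moving `f` by `∓ m/4` on `A`, `B` exhibits `A|B` as a block split.
-/

def NoEdgesOut (r : X → X → Prop) (U : Set X) : Prop :=
  ∀ u ∈ U, ∀ v ∉ U, ¬ r u v

section Graph

variable {r : X → X → Prop}

lemma NoEdgesOut.compl {U : Set X} (hr : ∀ u v, r u v → r v u) (hU : NoEdgesOut r U) :
    NoEdgesOut r Uᶜ :=
  fun v hv u hu h => hU u (not_not.mp hu) v hv (hr _ _ h)

lemma Set.Pairwise.subset_of_noEdgesOut {C U : Set X} (hC : C.Pairwise r)
    (hU : NoEdgesOut r U) {c : X} (hcC : c ∈ C) (hcU : c ∈ U) : C ⊆ U := by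
  intro y hyC
  by_contra hyU
  have hcy : c ≠ y := fun h => hyU (h ▸ hcU)
  exact hU c hcU y hyU (hC hcC hyC hcy)

lemma pairwise_or_pairwise_compl_of_notMem {U A B : Set X} {x : X} (hxU : x ∉ U)
    (hU : NoEdgesOut r U) (hA : A.Pairwise r) (hB : B.Pairwise r) (hcover : {x}ᶜ ⊆ A ∪ B) :
    U.Pairwise r ∨ Uᶜ.Pairwise r := by
  have hUAB : U ⊆ A ∪ B := fun u hu => hcover fun h => hxU (h ▸ hu)
  by_cases hUA : U ⊆ A
  · exact .inl (hA.mono hUA)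
  by_cases hUB : U ⊆ B
  · exact .inl (hB.mono hUB)
  obtain ⟨a, haU, haA⟩ := Set.not_subset.mp hUB
  obtain ⟨b, hbU, hbA⟩ := Set.not_subset.mp hUA
  have hAU : A ⊆ U := hA.subset_of_noEdgesOut hU ((hUAB haU).resolve_right haA) haU
  have hBU : B ⊆ U := hB.subset_of_noEdgesOut hU ((hUAB hbU).resolve_left hbA) hbU
  refine .inr (Set.Subsingleton.pairwise (Set.subsingleton_of_subset_singleton (a := x) ?_) r)
  intro y hy
  by_contra hyx
  exact hy ((Set.union_subset hAU hBU) (hcover hyx))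

lemma pairwise_or_pairwise_compl_of_cover (hr : ∀ u v, r u v → r v u) {U A B : Set X} {x : X}
    (hU : NoEdgesOut r U) (hA : A.Pairwise r) (hB : B.Pairwise r) (hcover : {x}ᶜ ⊆ A ∪ B) :
    U.Pairwise r ∨ Uᶜ.Pairwise r := by
  by_cases hxU : x ∈ U
  · have := pairwise_or_pairwise_compl_of_notMem (not_not.mpr hxU) (hU.compl hr) hA hB hcover
    rwa [compl_compl, or_comm] at this
  · exact pairwise_or_pairwise_compl_of_notMem hxU hU hA hB hcover

end Graph

section GammaGraph

variable {D : X → X → ℝ} {f : X → ℝ}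

lemma adj.symm (hsymm : ∀ x y, D x y = D y x) {u v : X} (h : adj D f u v) : adj D f v u :=
  ⟨h.1.symm, h.2.2.1, h.2.1, by rw [hsymm]; linarith [h.2.2.2]⟩

lemma adj_subtype_iff {p : X → Prop} {u v : Subtype p} :
    adj (fun u v : Subtype p => D u.1 v.1) (fun u => f u.1) u v ↔ adj D f u.1 v.1 := by
  simp only [adj, ne_eq, Subtype.ext_iff]

lemma memP.not_adj_iff (hf : memP D f) {u v : X} (huv : u ≠ v) (hu : f u ≠ 0) (hv : f v ≠ 0) :
    ¬ adj D f u v ↔ D u v = f u + f v := by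
  simp only [adj, huv, hu, hv, ne_eq, not_false_eq_true, true_and, not_lt]
  exact ⟨fun h => le_antisymm (hf u v) h, fun h => h.ge⟩

lemma Disconn.exists_noEdgesOut (hsupp : ∀ y, f y ≠ 0) (h : Disconn D f) :
    ∃ U : Set X, U.Nonempty ∧ Uᶜ.Nonempty ∧ NoEdgesOut (adj D f) U := by
  obtain ⟨U, V, hU, hV, hUV, hcover, hnadj⟩ := h
  have hVU : V = Uᶜ := by
    refine (IsCompl.compl_eq ⟨hUV, codisjoint_iff.mpr ?_⟩).symm
    show U ∪ V = Set.univ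
    rw [hcover]
    exact Set.eq_univ_of_forall hsupp
  subst hVU
  exact ⟨U, hU, hV, hnadj⟩

lemma disconn_subtype_of_noEdgesOut {p : X → Prop} (hsupp : ∀ y, f y ≠ 0) {U : Set X}
    (hU : NoEdgesOut (adj D f) U) {u v : X} (hu : u ∈ U) (hv : v ∉ U) (hpu : p u) (hpv : p v) :
    Disconn (fun u v : Subtype p => D u.1 v.1) (fun u => f u.1) := by
  refine ⟨{w | w.1 ∈ U}, {w | w.1 ∉ U}, ⟨⟨u, hpu⟩, hu⟩, ⟨⟨v, hpv⟩, hv⟩,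
    Set.disjoint_left.mpr fun w hw hw' => hw' hw, ?_, ?_⟩
  · ext w
    exact iff_of_true (Classical.em _) (hsupp w.1)
  · exact fun w hw w' hw' h => hU w.1 hw w'.1 hw' (adj_subtype_iff.mp h)

lemma exists_pairwise_noEdgesOut (hD : IsMetric D) (hsupp : ∀ y, f y ≠ 0) (x : X)
    (hdis : Disconn D f)
    (hrest : ¬ Disconn (fun u v : {y : X // y ≠ x} => D u.1 v.1)
        (fun u : {y : X // y ≠ x} => f u.1) ∨
      ∃ A' B' : Set {y : X // y ≠ x},
        DisjUnionTwoCliques (fun u v : {y : X // y ≠ x} => D u.1 v.1)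
          (fun u : {y : X // y ≠ x} => f u.1) A' B') :
    ∃ A : Set X, A.Nonempty ∧ Aᶜ.Nonempty ∧ A.Pairwise (adj D f) ∧ NoEdgesOut (adj D f) A := by
  have hr : ∀ u v, adj D f u v → adj D f v u := fun _ _ h => h.symm hD.2.1
  obtain ⟨U, hU, hUc, hUout⟩ := hdis.exists_noEdgesOut hsupp
  suffices h : U.Pairwise (adj D f) ∨ Uᶜ.Pairwise (adj D f) by
    rcases h with h | h
    · exact ⟨U, hU, hUc, h, hUout⟩
    · exact ⟨Uᶜ, hUc, by rwa [compl_compl], h, hUout.compl hr⟩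
  rcases hrest with hconn | ⟨A', B', -, -, -, hcover, hA', hB', -⟩
  · by_contra! h
    obtain ⟨hnU, hnUc⟩ := h
    have hside : ∀ {S : Set X}, ¬ S.Pairwise (adj D f) → ∃ s ∈ S, s ≠ x := fun {S} hS => by
      by_contra! h
      exact hS ((Set.subsingleton_of_subset_singleton h).pairwise _)
    obtain ⟨u, hu, hux⟩ := hside hnU
    obtain ⟨v, hv, hvx⟩ := hside hnUc
    exact hconn (disconn_subtype_of_noEdgesOut hsupp hUout hu hv hux hvx)
  · have himage {C : Set {y : X // y ≠ x}}
        (hC : C.Pairwise (adj (fun u v : {y : X // y ≠ x} => D u.1 v.1) fun u => f u.1)) :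
        (Subtype.val '' C).Pairwise (adj D f) :=
      (hC.imp fun _ _ h => adj_subtype_iff.mp h).image
    refine pairwise_or_pairwise_compl_of_cover (x := x) hr hUout (himage hA') (himage hB') ?_
    intro y hy
    have hyAB : (⟨y, hy⟩ : {y : X // y ≠ x}) ∈ A' ∪ B' := by rw [hcover]; exact hsupp y
    rcases hyAB with h | h
    · exact .inl ⟨_, h, rfl⟩
    · exact .inr ⟨_, h, rfl⟩

end GammaGraph

section TightSpan

variable {D : X → X → ℝ} {f : X → ℝ}

lemma memT.le (hf : memT D f) (x y : X) : D x y - f y ≤ f x := (hf x).2 ⟨y, rfl⟩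

lemma memT.memP (hf : memT D f) : memP D f := fun x y => by linarith [hf.le x y]

lemma memT.nonneg (hDxx : ∀ x, D x x = 0) (hf : memT D f) (x : X) : 0 ≤ f x := by
  linarith [hf.le x x, hDxx x]

lemma memT.eq_kuratowski_of_eq_zero (hD : IsMetric D) (hf : memT D f) {b : X} (hb : f b = 0) :
    f = fun y => D b y := by
  funext a
  obtain ⟨y, hy⟩ := (hf a).1
  have hby : D b y ≤ f y := by linarith [hf.le b y]
  have htri := hD.2.2.1 a b y
  have hab := hf.le a b
  dsimp only at hy
  rw [hD.2.1 b a]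
  linarith

lemma memT.pos (hD : IsMetric D) (hf : memT D f) (hnotK : ∀ z, f ≠ fun y => D z y) (x : X) :
    0 < f x :=
  (hf.nonneg hD.1 x).lt_of_ne fun h => hnotK x (hf.eq_kuratowski_of_eq_zero hD h.symm)

end TightSpan

section BlockSplit

variable {D : X → X → ℝ} {f : X → ℝ} {A : Set X}

lemma disjUnionTwoCliques_compl (hsupp : ∀ y, f y ≠ 0) (hA : A.Nonempty) (hAc : Aᶜ.Nonempty)
    (hclq : A.Pairwise (adj D f)) (hclq' : Aᶜ.Pairwise (adj D f))
    (hout : NoEdgesOut (adj D f) A) : DisjUnionTwoCliques D f A Aᶜ := by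
  refine ⟨hA, hAc, disjoint_compl_right, ?_, hclq, hclq', hout⟩
  rw [Set.union_compl_self]
  exact (Set.eq_univ_of_forall hsupp).symm

lemma exists_minimal_slack [Finite X] (hA : A.Nonempty) :
    ∃ a₀ ∈ A, ∃ a₀' ∈ A, ∀ a ∈ A, ∀ a' ∈ A,
      f a₀ + f a₀' - D a₀ a₀' ≤ f a + f a' - D a a' := by
  obtain ⟨⟨a₀, a₀'⟩, ⟨ha₀, ha₀'⟩, hmin⟩ := Set.exists_min_image (A ×ˢ A)
    (fun p => f p.1 + f p.2 - D p.1 p.2) (Set.toFinite _) (hA.prod hA)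
  exact ⟨a₀, ha₀, a₀', ha₀', fun a ha a' ha' => hmin (a, a') ⟨ha, ha'⟩⟩

lemma slack_pos_of_pairwise (hDxx : ∀ x, D x x = 0) (hpos : ∀ y, 0 < f y)
    (hclq : A.Pairwise (adj D f)) {a a' : X} (ha : a ∈ A) (ha' : a' ∈ A) :
    0 < f a + f a' - D a a' := by
  by_cases h : a = a'
  · subst h
    linarith [hDxx a, hpos a]
  · linarith [(hclq ha ha' h).2.2.2]

lemma vdist_eq_of_forall_le {Y : Set X} {y₀ y₀' : X} (h₀ : y₀ ∈ Y) (h₀' : y₀' ∈ Y)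
    (hle : ∀ y ∈ Y, ∀ y' ∈ Y, f y₀ + f y₀' - D y₀ y₀' ≤ f y + f y' - D y y') :
    vdist D f Y = (f y₀ + f y₀' - D y₀ y₀') / 2 := by
  rw [vdist, IsLeast.csInf_eq (a := f y₀ + f y₀' - D y₀ y₀')]
  · ring
  · exact ⟨⟨y₀, h₀, y₀', h₀', rfl⟩, by rintro _ ⟨y, hy, y', hy', rfl⟩; exact hle y hy y' hy'⟩

lemma kdist_compl_eq_of_mem (hf : memP D f) (hcross : ∀ a ∈ A, ∀ b ∉ A, D a b = f a + f b)
    {b₀ b₀' : X} (hb₀ : b₀ ∉ A) (hb₀' : b₀' ∉ A) (hb : D b₀ b₀' = f b₀ + f b₀') {y : X}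
    (hy : y ∈ A) : kdist D y Aᶜ = f y := by
  rw [kdist, vdist_eq_of_forall_le (f := fun b => D y b) hb₀ hb₀']
  · rw [hcross y hy b₀ hb₀, hcross y hy b₀' hb₀', hb]
    ring
  · intro b hbA b' hb'A
    rw [hcross y hy b hbA, hcross y hy b' hb'A, hcross y hy b₀ hb₀, hcross y hy b₀' hb₀', hb]
    linarith [hf b b']

lemma kdist_eq_of_notMem (hsymm : ∀ x y, D x y = D y x)
    (hcross : ∀ a ∈ A, ∀ b ∉ A, D a b = f a + f b) {a₀ a₀' : X} (ha₀ : a₀ ∈ A) (ha₀' : a₀' ∈ A)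
    (hmin : ∀ a ∈ A, ∀ a' ∈ A, f a₀ + f a₀' - D a₀ a₀' ≤ f a + f a' - D a a') {y : X}
    (hy : y ∉ A) : kdist D y A = f y + vdist D f A := by
  have hDy : ∀ a ∈ A, D y a = f a + f y := fun a ha => by rw [hsymm, hcross a ha y hy]
  rw [kdist, vdist_eq_of_forall_le ha₀ ha₀' hmin,
    vdist_eq_of_forall_le (f := fun a => D y a) ha₀ ha₀']
  · rw [hDy a₀ ha₀, hDy a₀' ha₀']
    ring
  · intro a ha a' ha'
    rw [hDy a ha, hDy a' ha', hDy a₀ ha₀, hDy a₀' ha₀']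
    linarith [hmin a ha a' ha']

lemma isoIdx_compl_eq (hf : memP D f) (hcross : ∀ a ∈ A, ∀ b ∉ A, D a b = f a + f b)
    {a₀ a₀' : X} (ha₀ : a₀ ∈ A) (ha₀' : a₀' ∈ A)
    (hmin : ∀ a ∈ A, ∀ a' ∈ A, f a₀ + f a₀' - D a₀ a₀' ≤ f a + f a' - D a a')
    {b₀ b₀' : X} (hb₀ : b₀ ∉ A) (hb₀' : b₀' ∉ A) (hb : D b₀ b₀' = f b₀ + f b₀') :
    isoIdx D A Aᶜ = vdist D f A := by
  have hsplit : ∀ a ∈ A, ∀ a' ∈ A, ∀ b ∉ A, ∀ b' ∉ A,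
      max (D a b + D a' b') (D a b' + D a' b) - D a a' - D b b' =
        (f a + f a' - D a a') + (f b + f b' - D b b') := by
    intro a ha a' ha' b hb b' hb'
    rw [hcross a ha b hb, hcross a' ha' b' hb', hcross a ha b' hb', hcross a' ha' b hb,
      show f a + f b' + (f a' + f b) = f a + f b + (f a' + f b') by ring, max_self]
    ring
  rw [isoIdx, vdist_eq_of_forall_le ha₀ ha₀' hmin,
    IsLeast.csInf_eq (a := f a₀ + f a₀' - D a₀ a₀')]
  · ring
  refine ⟨⟨a₀, ha₀, a₀', ha₀', b₀, hb₀, b₀', hb₀', ?_⟩, ?_⟩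
  · rw [hsplit a₀ ha₀ a₀' ha₀' b₀ hb₀ b₀' hb₀', hb]
    ring
  · rintro _ ⟨a, ha, a', ha', b, hb, b', hb', rfl⟩
    rw [hsplit a ha a' ha' b hb b' hb']
    linarith [hmin a ha a' ha', hf b b']

lemma endpointB_compl_eq (hsymm : ∀ x y, D x y = D y x) (hf : memP D f)
    (hcross : ∀ a ∈ A, ∀ b ∉ A, D a b = f a + f b) {a₀ a₀' : X} (ha₀ : a₀ ∈ A) (ha₀' : a₀' ∈ A)
    (hmin : ∀ a ∈ A, ∀ a' ∈ A, f a₀ + f a₀' - D a₀ a₀' ≤ f a + f a' - D a a')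
    {b₀ b₀' : X} (hb₀ : b₀ ∉ A) (hb₀' : b₀' ∉ A) (hb : D b₀ b₀' = f b₀ + f b₀') :
    endpointB D A Aᶜ = f := by
  funext y
  by_cases hy : y ∈ A
  · rw [endpointB, if_pos hy, kdist_compl_eq_of_mem hf hcross hb₀ hb₀' hb hy]
  · rw [endpointB, if_neg hy, kdist_eq_of_notMem hsymm hcross ha₀ ha₀' hmin hy,
      isoIdx_compl_eq hf hcross ha₀ ha₀' hmin hb₀ hb₀' hb]
    ring

lemma isBlockSplit_compl_of_slack (hDxx : ∀ x, D x x = 0) (hf : memP D f) (hpos : ∀ y, 0 < f y)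
    (hA : A.Nonempty) (hAc : Aᶜ.Nonempty) (hcross : ∀ a ∈ A, ∀ b ∉ A, D a b = f a + f b)
    {δ : ℝ} (hδ : 0 < δ) (hslack : ∀ a ∈ A, ∀ a' ∈ A, D a a' + δ ≤ f a + f a') :
    IsBlockSplit D A Aᶜ := by
  set g : X → ℝ := fun y => if y ∈ A then f y - δ / 4 else f y + δ / 4
  have hgA : ∀ a ∈ A, g a = f a - δ / 4 := fun a ha => if_pos ha
  have hgB : ∀ b ∉ A, g b = f b + δ / 4 := fun b hb => if_neg hb
  have hgpos : ∀ y, 0 < g y := by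
    intro y
    by_cases hy : y ∈ A
    · rw [hgA y hy]
      linarith [hslack y hy y hy, hDxx y]
    · rw [hgB y hy]
      linarith [hpos y]
  have hAA : ∀ a ∈ A, ∀ a' ∈ A, D a a' < g a + g a' := fun a ha a' ha' => by
    rw [hgA a ha, hgA a' ha']
    linarith [hslack a ha a' ha']
  have hBB : ∀ b ∉ A, ∀ b' ∉ A, D b b' < g b + g b' := fun b hb b' hb' => by
    rw [hgB b hb, hgB b' hb']
    linarith [hf b b']
  have hclq {C : Set X} (hC : ∀ u ∈ C, ∀ v ∈ C, D u v < g u + g v) : C.Pairwise (adj D g) :=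
    fun u hu v hv huv => ⟨huv, (hgpos u).ne', (hgpos v).ne', hC u hu v hv⟩
  refine ⟨g, fun u v => ?_, fun y => (hgpos y).ne',
    disjUnionTwoCliques_compl (fun y => (hgpos y).ne') hA hAc (hclq hAA) (hclq hBB) ?_⟩
  · by_cases hu : u ∈ A <;> by_cases hv : v ∈ A
    · exact (hAA u hu v hv).le
    · rw [hgA u hu, hgB v hv]
      linarith [hf u v]
    · rw [hgB u hu, hgA v hv]
      linarith [hf u v]
    · exact (hBB u hu v hv).le
  · intro a ha b hb hadj
    have := hadj.2.2.2
    rw [hgA a ha, hgB b hb] at this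
    linarith [hcross a ha b hb]

end BlockSplit

theorem stmt17_general [Fintype X] (D : X → X → ℝ) (hD : IsMetric D) (x : X)
    (f : X → ℝ) (hfT : memT D f) (hdis : Disconn D f)
    (hcut : (∃ y, f y = 0) ∨ ¬ ∃ A B : Set X, DisjUnionTwoCliques D f A B)
    (hnotK : ∀ z : X, f ≠ fun y => D z y)
    (hrest : ¬ Disconn (fun u v : {y : X // y ≠ x} => D u.1 v.1)
        (fun u : {y : X // y ≠ x} => f u.1) ∨
      ∃ A' B' : Set {y : X // y ≠ x},
        DisjUnionTwoCliques (fun u v : {y : X // y ≠ x} => D u.1 v.1)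
          (fun u : {y : X // y ≠ x} => f u.1) A' B') :
    ∃ A : Set X, A ⊆ {y | f y ≠ 0} ∧ A.Nonempty ∧
      (∀ a ∈ A, ∀ a' ∈ A, a ≠ a' → adj D f a a') ∧
      (∀ a ∈ A, ∀ y : X, y ∉ A → ¬ adj D f a y) ∧
      0 < vdist D f A ∧
      IsBlockSplit D A Aᶜ ∧ f = endpointB D A Aᶜ := by
  have hfP := hfT.memP
  have hpos := hfT.pos hD hnotK
  have hsupp : ∀ y, f y ≠ 0 := fun y => (hpos y).ne'
  obtain ⟨A, hA, hAc, hclq, hout⟩ := exists_pairwise_noEdgesOut hD hsupp x hdis hrest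
  have hcross : ∀ a ∈ A, ∀ b ∉ A, D a b = f a + f b := fun a ha b hb =>
    (hfP.not_adj_iff (ne_of_mem_of_not_mem ha hb) (hsupp a) (hsupp b)).mp (hout a ha b hb)
  have hnotClq : ¬ Aᶜ.Pairwise (adj D f) := fun hclq' =>
    hcut.resolve_left (fun ⟨y, hy⟩ => hsupp y hy)
      ⟨A, Aᶜ, disjUnionTwoCliques_compl hsupp hA hAc hclq hclq' hout⟩
  obtain ⟨b₀, hb₀, b₀', hb₀', hne, hnadj⟩ : ∃ b ∈ Aᶜ, ∃ b' ∈ Aᶜ, b ≠ b' ∧ ¬ adj D f b b' := by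
    simpa [Set.Pairwise] using hnotClq
  have hb := (hfP.not_adj_iff hne (hsupp b₀) (hsupp b₀')).mp hnadj
  obtain ⟨a₀, ha₀, a₀', ha₀', hmin⟩ := exists_minimal_slack (D := D) (f := f) hA
  have hm := slack_pos_of_pairwise hD.1 hpos hclq ha₀ ha₀'
  refine ⟨A, fun a _ => hsupp a, hA, hclq, hout, ?_, ?_, ?_⟩
  · rw [vdist_eq_of_forall_le ha₀ ha₀' hmin]
    exact half_pos hm
  · exact isBlockSplit_compl_of_slack hD.1 hfP hpos hA hAc hcross hm
      fun a ha a' ha' => by linarith [hmin a ha a' ha']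
  · exact (endpointB_compl_eq hD.2.1 hfP hcross ha₀ ha₀' hmin hb₀ hb₀' hb).symm

theorem stmt17 [Fintype X] (D : X → X → ℝ) (hD : IsMetric D) (x : X)
    (f : X → ℝ) (hfT : memT D f) (hdis : Disconn D f)
    (hcut : (∃ y, f y = 0) ∨ ¬ ∃ A B : Set X, DisjUnionTwoCliques D f A B)
    (hnotK : ∀ z : X, f ≠ fun y => D z y)
    (hnoBS : ¬ ∃ A B : Set X, IsBlockSplit D A B ∧
      (f = endpointA D A B ∨ f = endpointB D A B))
    (hrest : ¬ Disconn (fun u v : {y : X // y ≠ x} => D u.1 v.1)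
        (fun u : {y : X // y ≠ x} => f u.1) ∨
      ∃ A' B' : Set {y : X // y ≠ x},
        DisjUnionTwoCliques (fun u v : {y : X // y ≠ x} => D u.1 v.1)
          (fun u : {y : X // y ≠ x} => f u.1) A' B') :
    ∃ A : Set X, A ⊆ {y | f y ≠ 0} ∧ A.Nonempty ∧
      (∀ a ∈ A, ∀ a' ∈ A, a ≠ a' → adj D f a a') ∧
      (∀ a ∈ A, ∀ y : X, y ∉ A → ¬ adj D f a y) ∧
      0 < vdist D f A ∧
      IsBlockSplit D A Aᶜ ∧ f = endpointB D A Aᶜ :=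
  stmt17_general D hD x f hfT hdis hcut hnotK hrest
end
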